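/- If the density matrices σ_i in an ensemble {p_i, σ_i} (with all p_i > 0) pairwise commute, then there exists a POVM {N_j} (namely the projective measurement in a common eigenbasis) such that the classical mutual information of p_{ij} = p_i Tr(N_j σ_i) equals the Holevo quantity χ = S(Σ_i p_i σ_i) - Σ_i p_i S(σ_i). -/

import Mathlib

open Matrix Kronecker ComplexOrder
noncomputable section

/-- A density matrix: positive semidefinite with unit trace. -/
def IsDensity {n : Type} [Fintype n] [DecidableEq n] (ρ : Matrix n n ℂ) : Prop :=
  ρ.PosSemidef ∧ ρ.trace = 1

/-- Partial trace over the second (B) factor, yielding the reduced state on A. -/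
def ptraceB {A B : Type} [Fintype A] [Fintype B] (ρ : Matrix (A × B) (A × B) ℂ) :
    Matrix A A ℂ := fun a a' => ∑ b, ρ (a, b) (a', b)

/-- Partial trace over the first (A) factor, yielding the reduced state on B. -/
def ptraceA {A B : Type} [Fintype A] [Fintype B] (ρ : Matrix (A × B) (A × B) ℂ) :
    Matrix B B ℂ := fun b b' => ∑ a, ρ (a, b) (a, b')

/-- Von Neumann entropy, S(ρ) = -Tr ρ log ρ, via the eigenvalues (convention 0 log 0 = 0). -/
def vN {n : Type} [Fintype n] [DecidableEq n] (ρ : Matrix n n ℂ) : ℝ :=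
  if h : ρ.IsHermitian then -∑ i, h.eigenvalues i * Real.log (h.eigenvalues i) else 0

/-- Quantum mutual information I(A:B) = S(A) + S(B) - S(AB). -/
def mutualInfo {A B : Type} [Fintype A] [Fintype B] [DecidableEq A] [DecidableEq B]
    (ρ : Matrix (A × B) (A × B) ℂ) : ℝ :=
  vN (ptraceB ρ) + vN (ptraceA ρ) - vN ρ

/-- Functional calculus for Hermitian matrices via the spectral decomposition. -/
def herFun {n : Type} [Fintype n] [DecidableEq n] (f : ℝ → ℝ) (ρ : Matrix n n ℂ) :
    Matrix n n ℂ :=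
  if h : ρ.IsHermitian then
    (h.eigenvectorUnitary : Matrix n n ℂ) *
      Matrix.diagonal (fun i => (f (h.eigenvalues i) : ℂ)) *
      star (h.eigenvectorUnitary : Matrix n n ℂ)
  else 0

/-- Matrix logarithm on the support (log 0 := 0). -/
def mlog {n : Type} [Fintype n] [DecidableEq n] (ρ : Matrix n n ℂ) : Matrix n n ℂ :=
  herFun Real.log ρ

/-- Matrix square root of a Hermitian matrix. -/
def msqrt {n : Type} [Fintype n] [DecidableEq n] (ρ : Matrix n n ℂ) : Matrix n n ℂ :=
  herFun Real.sqrt ρ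

/-- Inverse square root on the support. -/
def minvsqrt {n : Type} [Fintype n] [DecidableEq n] (ρ : Matrix n n ℂ) : Matrix n n ℂ :=
  herFun (fun x => if x = 0 then 0 else 1 / Real.sqrt x) ρ

/-- Quantum relative entropy S(ρ‖σ) = Tr ρ (log ρ - log σ). -/
def relEntropy {n : Type} [Fintype n] [DecidableEq n] (ρ σ : Matrix n n ℂ) : ℝ :=
  ((ρ * (mlog ρ - mlog σ)).trace).re

/-- The support of σ contains the support of ρ (kernel inclusion). -/
def SuppLE {n : Type} [Fintype n] (ρ σ : Matrix n n ℂ) : Prop :=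
  ∀ x : n → ℂ, σ *ᵥ x = 0 → ρ *ᵥ x = 0

/-- Choi matrix of a linear map on matrices. -/
def choi {A A' : Type} [Fintype A] [Fintype A'] [DecidableEq A]
    (Φ : Matrix A A ℂ →ₗ[ℂ] Matrix A' A' ℂ) : Matrix (A × A') (A × A') ℂ :=
  fun p q => Φ (Matrix.single p.1 q.1 1) p.2 q.2

/-- A quantum channel: completely positive (positive Choi matrix) and trace preserving. -/
def IsCPTP {A A' : Type} [Fintype A] [Fintype A'] [DecidableEq A]
    (Φ : Matrix A A ℂ →ₗ[ℂ] Matrix A' A' ℂ) : Prop :=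
  (choi Φ).PosSemidef ∧ ∀ X, (Φ X).trace = X.trace

/-- Tensor product Φ ⊗ Ψ of linear maps on matrix spaces. -/
def tensorMap {A B A' B' : Type} [Fintype A] [Fintype B] [DecidableEq A] [DecidableEq B]
    (Φ : Matrix A A ℂ →ₗ[ℂ] Matrix A' A' ℂ) (Ψ : Matrix B B ℂ →ₗ[ℂ] Matrix B' B' ℂ) :
    Matrix (A × B) (A × B) ℂ →ₗ[ℂ] Matrix (A' × B') (A' × B') ℂ where
  toFun X := fun p q => ∑ i, ∑ i', ∑ j, ∑ j',
    X (i, j) (i', j') * Φ (Matrix.single i i' 1) p.1 q.1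
      * Ψ (Matrix.single j j' 1) p.2 q.2
  map_add' X Y := by
    funext p q
    show _ = (_ : ℂ) + _
    simp [Matrix.add_apply, add_mul, Finset.sum_add_distrib]
  map_smul' c X := by
    funext p q
    show _ = c * (_ : ℂ)
    simp [Matrix.smul_apply, smul_eq_mul, Finset.mul_sum, mul_assoc]

/-- Shannon entropy of a finite distribution (0 log 0 = 0). -/
def shannon {ι : Type} [Fintype ι] (p : ι → ℝ) : ℝ := -∑ i, p i * Real.log (p i)

/-- Classical mutual information of a joint distribution. -/
def cMI {ι κ : Type} [Fintype ι] [Fintype κ] (p : ι → κ → ℝ) : ℝ :=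
  shannon (fun i => ∑ j, p i j) + shannon (fun j => ∑ i, p i j)
    - shannon (fun x : ι × κ => p x.1 x.2)

/-- A POVM: positive operators summing to the identity. -/
def IsPOVM {n ι : Type} [Fintype n] [DecidableEq n] [Fintype ι]
    (M : ι → Matrix n n ℂ) : Prop :=
  (∀ i, (M i).PosSemidef) ∧ ∑ i, M i = 1

/-- An orthonormal family of vectors. -/
def OrthonormalFam {ι n : Type} [Fintype n] [DecidableEq ι] (v : ι → n → ℂ) : Prop :=
  ∀ i i', ∑ a, star (v i a) * v i' a = if i = i' then 1 else 0

/-- The rank-one projector |v⟩⟨v|. -/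
def proj {n : Type} (v : n → ℂ) : Matrix n n ℂ := fun a a' => v a * star (v a')

/-- Probability distribution induced by a pair of local POVMs on a bipartite state. -/
def locProb {A B ι κ : Type} [Fintype A] [Fintype B] [Fintype ι] [Fintype κ]
    (M : ι → Matrix A A ℂ) (N : κ → Matrix B B ℂ)
    (ρ : Matrix (A × B) (A × B) ℂ) : ι → κ → ℝ :=
  fun i j => (((M i ⊗ₖ N j) * ρ).trace).re

/-- The classical–classical mutual information I_CC: the supremum of the classical
mutual information extractable by local POVMs. -/
def Icc {A B : Type} [Fintype A] [Fintype B] [DecidableEq A] [DecidableEq B]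
    (ρ : Matrix (A × B) (A × B) ℂ) : ℝ :=
  sSup {x | ∃ (k l : ℕ) (M : Fin k → Matrix A A ℂ) (N : Fin l → Matrix B B ℂ),
    IsPOVM M ∧ IsPOVM N ∧ x = cMI (locProb M N ρ)}

/-- The state obtained by applying the measurement map of the POVM `M` on the A part. -/
def cqMeasured {A B : Type} [Fintype A] [Fintype B] {k : ℕ}
    (M : Fin k → Matrix A A ℂ) (ρ : Matrix (A × B) (A × B) ℂ) :
    Matrix (Fin k × B) (Fin k × B) ℂ :=
  fun p q => if p.1 = q.1 then ∑ a, ∑ a', M p.1 a a' * ρ (a', p.2) (a, q.2) else 0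

/-- The classical–quantum mutual information I_CQ: supremum of mutual information
after a measurement map on A. -/
def Icq {A B : Type} [Fintype A] [Fintype B] [DecidableEq A] [DecidableEq B]
    (ρ : Matrix (A × B) (A × B) ℂ) : ℝ :=
  sSup {x | ∃ (k : ℕ) (M : Fin k → Matrix A A ℂ),
    IsPOVM M ∧ x = mutualInfo (cqMeasured M ρ)}

/-- Classical–classical (strictly classically correlated) states: diagonal in a
product orthonormal basis, with a joint probability distribution on the diagonal. -/
def IsCC {A B : Type} [Fintype A] [Fintype B] [DecidableEq A] [DecidableEq B]
    (ρ : Matrix (A × B) (A × B) ℂ) : Prop :=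
  ∃ (U : Matrix A A ℂ) (V : Matrix B B ℂ) (p : A × B → ℝ),
    U ∈ Matrix.unitaryGroup A ℂ ∧ V ∈ Matrix.unitaryGroup B ℂ ∧
    (∀ x, 0 ≤ p x) ∧ ∑ x, p x = 1 ∧
    ρ = (U ⊗ₖ V) * Matrix.diagonal (fun x => (p x : ℂ)) * star (U ⊗ₖ V)

/-- Marginal of a 4-partite state on the first copy AB (tracing out A'B'). -/
def marginal1 {A A' B B' : Type} [Fintype A] [Fintype A'] [Fintype B] [Fintype B']
    (σ : Matrix ((A × A') × (B × B')) ((A × A') × (B × B')) ℂ) :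
    Matrix (A × B) (A × B) ℂ :=
  fun p q => ∑ x : A', ∑ y : B', σ ((p.1, x), (p.2, y)) ((q.1, x), (q.2, y))

/-- Marginal of a 4-partite state on the second copy A'B' (tracing out AB). -/
def marginal2 {A A' B B' : Type} [Fintype A] [Fintype A'] [Fintype B] [Fintype B']
    (σ : Matrix ((A × A') × (B × B')) ((A × A') × (B × B')) ℂ) :
    Matrix (A' × B') (A' × B') ℂ :=
  fun p q => ∑ a : A, ∑ b : B, σ ((a, p.1), (b, p.2)) ((a, q.1), (b, q.2))

/-- A bipartite state is locally broadcastable if local channels can produce a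
broadcast state, i.e. a state on two copies whose both copy-marginals equal ρ. -/
def LocallyBroadcastable {A B : Type} [Fintype A] [Fintype B] [DecidableEq A] [DecidableEq B]
    (ρ : Matrix (A × B) (A × B) ℂ) : Prop :=
  ∃ (ΘA : Matrix A A ℂ →ₗ[ℂ] Matrix (A × A) (A × A) ℂ)
    (ΘB : Matrix B B ℂ →ₗ[ℂ] Matrix (B × B) (B × B) ℂ),
    IsCPTP ΘA ∧ IsCPTP ΘB ∧
    marginal1 (tensorMap ΘA ΘB ρ) = ρ ∧ marginal2 (tensorMap ΘA ΘB ρ) = ρ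

/-- Adjoint (dual) of a linear map on matrices w.r.t. the Hilbert–Schmidt inner product. -/
def adjMap {A A' : Type} [Fintype A] [Fintype A'] [DecidableEq A]
    (Φ : Matrix A A ℂ →ₗ[ℂ] Matrix A' A' ℂ) :
    Matrix A' A' ℂ →ₗ[ℂ] Matrix A A ℂ where
  toFun Y := fun a a' => ((Φ (Matrix.single a a' 1))ᴴ * Y).trace
  map_add' Y Z := by
    funext a a'
    show _ = (_ : ℂ) + _
    simp [Matrix.mul_add, Matrix.trace_add, Matrix.add_apply]
  map_smul' c Y := by
    funext a a'
    show _ = c * (_ : ℂ)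
    simp [Matrix.mul_smul, Matrix.trace_smul, Matrix.smul_apply]

/-- The Petz recovery map of the channel Φ with respect to the state σ,
Λ*(X) = σ^{1/2} Φ†( Φ(σ)^{-1/2} X Φ(σ)^{-1/2} ) σ^{1/2}. -/
def petz {A A' : Type} [Fintype A] [Fintype A'] [DecidableEq A] [DecidableEq A']
    (Φ : Matrix A A ℂ →ₗ[ℂ] Matrix A' A' ℂ) (σ : Matrix A A ℂ) :
    Matrix A' A' ℂ →ₗ[ℂ] Matrix A A ℂ where
  toFun X := msqrt σ * adjMap Φ (minvsqrt (Φ σ) * X * minvsqrt (Φ σ)) * msqrt σ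
  map_add' X Y := by
    simp [Matrix.mul_add, Matrix.add_mul, map_add]
  map_smul' c X := by
    simp [Matrix.mul_smul, Matrix.smul_mul, _root_.map_smul]

/-- Assemble |i⟩⟨i|_A ⊗ |j⟩⟨j|_B ⊗ R_{A'B'} (as matrices P on A, Q on B) into a state on
the bipartite cut (A A') : (B B'). -/
def assemble {A A' B B' : Type} (P : Matrix A A ℂ) (Q : Matrix B B ℂ)
    (R : Matrix (A' × B') (A' × B') ℂ) :
    Matrix ((A × A') × (B × B')) ((A × A') × (B × B')) ℂ :=
  fun p q => P p.1.1 q.1.1 * Q p.2.1 q.2.1 * R (p.1.2, p.2.2) (q.1.2, q.2.2)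

/-- Separable bipartite states: convex combinations of product states. -/
def IsSepState {A B : Type} [Fintype A] [Fintype B] [DecidableEq A] [DecidableEq B]
    (ρ : Matrix (A × B) (A × B) ℂ) : Prop :=
  ∃ (k : ℕ) (q : Fin k → ℝ) (α : Fin k → Matrix A A ℂ) (β : Fin k → Matrix B B ℂ),
    (∀ i, 0 ≤ q i) ∧ ∑ i, q i = 1 ∧ (∀ i, IsDensity (α i)) ∧ (∀ i, IsDensity (β i)) ∧
    ρ = ∑ i, (q i : ℂ) • (α i ⊗ₖ β i)

/-! Commuting Hermitian matrices have a common orthonormal eigenbasis: the joint eigenspaces of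
the family are pairwise orthogonal and span the space. In such a basis each `σ i` is diagonal with
eigenvalue vector `q i`, so `S(σ i) = H(q i)` and `S(∑ p i σ i) = H(∑ p i q i)`. Measuring in
that basis yields the joint distribution `p i * q i j`, whose entropy is `H(p) + ∑ p i H(q i)` by
the chain rule; subtracting it from `H(p) + H(∑ p i q i)` leaves exactly the Holevo quantity. -/

open Unitary

open Function Module.End in
theorem LinearMap.IsSymmetric.exists_orthonormalBasis_forall_apply_eq_smul
    {𝕜 E ι κ : Type*} [RCLike 𝕜] [NormedAddCommGroup E] [InnerProductSpace 𝕜 E]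
    [FiniteDimensional 𝕜 E] [Fintype κ] (hκ : Module.finrank 𝕜 E = Fintype.card κ)
    {T : ι → Module.End 𝕜 E} (hT : ∀ i, (T i).IsSymmetric) (hC : Pairwise (Commute on T)) :
    ∃ (b : OrthonormalBasis κ 𝕜 E) (χ : κ → ι → 𝕜), ∀ a i, T i (b a) = χ a i • b a := by
  classical
  let V (χ : ι → 𝕜) := ⨅ i, eigenspace (T i) (χ i)
  have hV : DirectSum.IsInternal V := directSum_isInternal_of_pairwise_commute hT hC
  -- `ι → 𝕜` is infinite, but only finitely many joint eigenspaces are nonzero.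
  let := hV.submodule_iSupIndep.fintypeNeBotOfFiniteDimensional
  have hV₀ : DirectSum.IsInternal fun χ : {χ // V χ ≠ ⊥} => V χ :=
    DirectSum.isInternal_ne_bot_iff.mpr hV
  have hV' := (orthogonalFamily_iInf_eigenspaces hT).comp
    (Subtype.val_injective (p := fun χ => V χ ≠ ⊥))
  refine ⟨(hV₀.subordinateOrthonormalBasis hκ hV').reindex (Fintype.equivFin κ).symm,
    fun a => (hV₀.subordinateOrthonormalBasisIndex hκ (Fintype.equivFin κ a) hV').1,
    fun a i => ?_⟩
  rw [OrthonormalBasis.reindex_apply, Equiv.symm_symm]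
  exact mem_eigenspace_iff.mp
    ((Submodule.mem_iInf _).mp (hV₀.subordinateOrthonormalBasis_subordinate hκ _ hV') i)

theorem Matrix.exists_unitary_diagonal_of_commute {𝕜 ι n : Type*} [RCLike 𝕜] [Fintype n]
    [DecidableEq n] {A : ι → Matrix n n 𝕜} (hA : ∀ i, (A i).IsHermitian)
    (hC : ∀ i j, A i * A j = A j * A i) :
    ∃ (U : unitaryGroup n 𝕜) (d : ι → n → ℝ),
      ∀ i, A i = conjStarAlgAut 𝕜 _ U (diagonal (RCLike.ofReal ∘ d i)) := by
  have hT i := isSymmetric_toEuclideanLin_iff.mpr (hA i)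
  obtain ⟨b, χ, hb⟩ := LinearMap.IsSymmetric.exists_orthonormalBasis_forall_apply_eq_smul
    finrank_euclideanSpace hT fun i j _ => Commute.map (hC i j) (toLpLinAlgEquiv 2 (R := 𝕜))
  have hχ a i : (RCLike.re (χ a i) : 𝕜) = χ a i :=
    RCLike.conj_eq_iff_re.mp <| (hT i).conj_eigenvalue_eq_self <|
      Module.End.hasEigenvalue_of_hasEigenvector
        ⟨Module.End.mem_eigenspace_iff.mpr (hb a i), b.toBasis.ne_zero a⟩
  let U : unitaryGroup n 𝕜 := ⟨(EuclideanSpace.basisFun n 𝕜).toBasis.toMatrix b.toBasis,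
    (EuclideanSpace.basisFun n 𝕜).toMatrix_orthonormalBasis_mem_unitary b⟩
  refine ⟨U, fun i a => RCLike.re (χ a i), fun i => ?_⟩
  have hAU : A i * (U : Matrix n n 𝕜) =
      (U : Matrix n n 𝕜) * diagonal (RCLike.ofReal ∘ fun a => RCLike.re (χ a i)) := by
    ext x a
    have h := congr_arg (fun v => v.ofLp x) (hb a i)
    simp only [toLpLin_apply, mulVec, dotProduct, PiLp.smul_apply, smul_eq_mul] at h
    rw [mul_diagonal, mul_apply, Function.comp_apply, hχ, mul_comm]
    simpa [U, Module.Basis.toMatrix_apply] using h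
  rw [conjStarAlgAut_apply, ← hAU, mul_assoc, Unitary.mul_star_self_of_mem U.2, mul_one]

theorem Matrix.trace_conjStarAlgAut {R n : Type*} [CommRing R] [StarRing R] [Fintype n]
    [DecidableEq n] (U : unitaryGroup n R) (X : Matrix n n R) :
    (conjStarAlgAut R _ U X).trace = X.trace := by
  rw [conjStarAlgAut_apply, trace_mul_cycle, Unitary.coe_star_mul_self, one_mul]

theorem Matrix.IsHermitian.map_eigenvalues_eq_of_eq_conjStarAlgAut_diagonal {𝕜 n : Type*}
    [RCLike 𝕜] [Fintype n] [DecidableEq n] {A : Matrix n n 𝕜} (hA : A.IsHermitian)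
    {U : unitaryGroup n 𝕜} {d : n → ℝ}
    (h : A = conjStarAlgAut 𝕜 _ U (diagonal (RCLike.ofReal ∘ d))) :
    Finset.univ.val.map hA.eigenvalues = Finset.univ.val.map d := by
  have hchar : A.charpoly = (diagonal (RCLike.ofReal ∘ d : n → 𝕜)).charpoly := by
    rw [h, conjStarAlgAut_apply, charpoly_mul_comm, ← mul_assoc, Unitary.coe_star_mul_self,
      one_mul]
  have hroots := hA.roots_charpoly_eq_eigenvalues
  rw [hchar, charpoly_diagonal, Polynomial.roots_prod _ _
    (Finset.prod_ne_zero_iff.mpr fun a _ => Polynomial.X_sub_C_ne_zero _)] at hroots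
  simpa [Multiset.map_map] using congr_arg (Multiset.map RCLike.re) hroots.symm

theorem vN_conjStarAlgAut_diagonal {n : Type} [Fintype n] [DecidableEq n]
    (U : unitaryGroup n ℂ) (d : n → ℝ) :
    vN (conjStarAlgAut ℂ _ U (diagonal (RCLike.ofReal ∘ d))) = shannon d := by
  have hA : (conjStarAlgAut ℂ _ U (diagonal (RCLike.ofReal ∘ d))).IsHermitian :=
    IsSelfAdjoint.map (isHermitian_iff_isSelfAdjoint.mp
      (isHermitian_diagonal_iff.mpr fun a => RCLike.conj_ofReal (d a))) _
  have h := congr_arg (fun s => (s.map fun x => x * Real.log x).sum)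
    (hA.map_eigenvalues_eq_of_eq_conjStarAlgAut_diagonal rfl)
  simp only [Multiset.map_map] at h
  rw [vN, dif_pos hA, shannon, Finset.sum_eq_multiset_sum, Finset.sum_eq_multiset_sum]
  exact congr_arg Neg.neg h

theorem shannon_comp_equiv {ι κ : Type} [Fintype ι] [Fintype κ] (e : κ ≃ ι) (p : ι → ℝ) :
    shannon (p ∘ e) = shannon p := by
  simp only [shannon, Function.comp_apply, e.sum_comp (fun i => p i * Real.log (p i))]

theorem cMI_comp_equiv {ι κ κ' : Type} [Fintype ι] [Fintype κ] [Fintype κ'] (e : κ' ≃ κ)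
    (P : ι → κ → ℝ) : cMI (fun i j => P i (e j)) = cMI P := by
  have hrow i : ∑ j, P i (e j) = ∑ j, P i j := e.sum_comp (P i)
  simp only [cMI, hrow]
  rw [← shannon_comp_equiv e (fun j => ∑ i, P i j),
    ← shannon_comp_equiv ((Equiv.refl ι).prodCongr e) (fun x => P x.1 x.2)]
  rfl

theorem shannon_mul_eq_add {ι κ : Type} [Fintype ι] [Fintype κ] (p : ι → ℝ) {q : ι → κ → ℝ}
    (hq : ∀ i, ∑ j, q i j = 1) :
    shannon (fun x : ι × κ => p x.1 * q x.1 x.2) = shannon p + ∑ i, p i * shannon (q i) := by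
  have h (x : ℝ) : -(x * Real.log x) = Real.negMulLog x := by rw [Real.negMulLog, neg_mul]
  simp only [shannon, ← Finset.sum_neg_distrib, h, Fintype.sum_prod_type, Real.negMulLog_mul,
    Finset.sum_add_distrib, ← Finset.sum_mul, ← Finset.mul_sum, hq, one_mul]

theorem cMI_mul_eq {ι κ : Type} [Fintype ι] [Fintype κ] (p : ι → ℝ) {q : ι → κ → ℝ}
    (hq : ∀ i, ∑ j, q i j = 1) :
    cMI (fun i j => p i * q i j) =
      shannon (fun j => ∑ i, p i * q i j) - ∑ i, p i * shannon (q i) := by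
  simp only [cMI, shannon_mul_eq_add p hq, ← Finset.mul_sum, hq, mul_one]
  ring

theorem isPOVM_diagonal_single (n : Type) [Fintype n] [DecidableEq n] :
    IsPOVM fun a : n => (diagonal (Pi.single a 1) : Matrix n n ℂ) :=
  ⟨fun a => posSemidef_diagonal_iff.mpr (Pi.single_nonneg.mpr zero_le_one),
    by simpa [Finset.univ_sum_single (fun _ : n => (1 : ℂ))] using
      (map_sum (diagonalAddMonoidHom n ℂ) (fun a => Pi.single a 1) Finset.univ).symm⟩

theorem IsPOVM.conjStarAlgAut {n ι : Type} [Fintype n] [DecidableEq n] [Fintype ι]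
    {M : ι → Matrix n n ℂ} (hM : IsPOVM M) (U : unitaryGroup n ℂ) :
    IsPOVM fun i => conjStarAlgAut ℂ _ U (M i) :=
  ⟨fun i => by simpa only [conjStarAlgAut_apply, star_eq_conjTranspose] using
      (hM.1 i).mul_mul_conjTranspose_same (U : Matrix n n ℂ),
    by rw [← map_sum, hM.2, map_one]⟩

theorem IsPOVM.comp_equiv {n ι κ : Type} [Fintype n] [DecidableEq n] [Fintype ι] [Fintype κ]
    {M : ι → Matrix n n ℂ} (hM : IsPOVM M) (e : κ ≃ ι) : IsPOVM (M ∘ e) :=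
  ⟨fun j => hM.1 (e j), by rw [Function.comp_def, e.sum_comp M, hM.2]⟩

theorem holevo_attained_of_commute_general {ι n : Type} [Fintype ι] [Fintype n] [DecidableEq n]
    (p : ι → ℝ)
    (σ : ι → Matrix n n ℂ) (hσ : ∀ i, IsDensity (σ i))
    (hcomm : ∀ i i', σ i * σ i' = σ i' * σ i) :
    ∃ (k : ℕ) (N : Fin k → Matrix n n ℂ), IsPOVM N ∧
      cMI (fun i j => p i * ((N j * σ i).trace).re)
        = vN (∑ i, (p i : ℂ) • σ i) - ∑ i, p i * vN (σ i) := by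
  obtain ⟨U, q, hσU⟩ := exists_unitary_diagonal_of_commute (fun i => (hσ i).1.1) hcomm
  set Φ := conjStarAlgAut ℂ (Matrix n n ℂ) U
  have hq i : ∑ a, q i a = 1 := by
    simpa [hσU, trace_conjStarAlgAut, Complex.re_sum] using congr_arg Complex.re (hσ i).2
  have hprob i a : ((Φ (diagonal (Pi.single a 1)) * σ i).trace).re = q i a := by
    rw [hσU, ← map_mul, trace_conjStarAlgAut, diagonal_mul_diagonal, trace_diagonal]
    simp [Pi.single_apply]
  have hmix : ∑ i, (p i : ℂ) • σ i = Φ (diagonal (RCLike.ofReal ∘ fun a => ∑ i, p i * q i a)) := by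
    simp only [hσU, ← map_smul, ← map_sum]
    congr 1
    ext a b
    by_cases h : a = b <;> simp [h, Matrix.sum_apply]
  let e := (Fintype.equivFin n).symm
  refine ⟨_, fun j => Φ (diagonal (Pi.single (e j) 1)),
    ((isPOVM_diagonal_single n).conjStarAlgAut U).comp_equiv e, ?_⟩
  simp only [hprob]
  rw [cMI_comp_equiv e (fun i a => p i * q i a), cMI_mul_eq p hq, hmix,
    vN_conjStarAlgAut_diagonal]
  simp only [hσU, Φ, vN_conjStarAlgAut_diagonal]

/-- If the states of an ensemble pairwise commute, some POVM (a projective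
measurement in a common eigenbasis) attains the Holevo quantity. -/
theorem holevo_attained_of_commute {ι n : Type} [Fintype ι] [Fintype n] [DecidableEq n]
    (p : ι → ℝ) (hp : ∀ i, 0 < p i) (hp1 : ∑ i, p i = 1)
    (σ : ι → Matrix n n ℂ) (hσ : ∀ i, IsDensity (σ i))
    (hcomm : ∀ i i', σ i * σ i' = σ i' * σ i) :
    ∃ (k : ℕ) (N : Fin k → Matrix n n ℂ), IsPOVM N ∧
      cMI (fun i j => p i * ((N j * σ i).trace).re)
        = vN (∑ i, (p i : ℂ) • σ i) - ∑ i, p i * vN (σ i) :=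
  holevo_attained_of_commute_general p σ hσ hcomm
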